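/- Consider a deterministic system with state space S, action space A, transition function T : S × A → S, bounded reward r : S × A → ℝ, discount factor γ ∈ (0,1), and bounded potential Φ : S → ℝ. For an initial state x and an action sequence a : ℕ → A, let x_0 = x, x_{t+1} = T(x_t, a_t), and define the return G(x, a) = ∑_{t=0}^∞ γ^t · r(x_t, a_t) and the shaped return G'(x, a) = ∑_{t=0}^∞ γ^t · (r(x_t, a_t) + γ·Φ(x_{t+1}) − Φ(x_t)). Then for every state x, an action sequence a attains the supremum of G'(x, ·) over all action sequences if and only if it attains the supremum of G(x, ·); i.e., the set of optimal action sequences is identical under the original and shaped rewards. -/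

import Mathlib

/-!
Along any trajectory the potential terms telescope: since `γ ^ t * Φ (x t) → 0`,
`∑ γ ^ t * (γ * Φ (x (t + 1)) - Φ (x t)) = -Φ x`. Hence the shaped return is the original
return shifted by the constant `-Φ x`, and a shift by a constant moves the supremum (finite,
as the rewards are bounded) by the same constant.
-/

open Set

def traj {S A : Type*} (T : S × A → S) (x : S) (a : ℕ → A) : ℕ → S
  | 0 => x
  | t + 1 => T (traj T x a t, a t)

noncomputable def discountedReturn {S A : Type*} (T : S × A → S) (r : S × A → ℝ) (γ : ℝ) (x : S)
    (a : ℕ → A) : ℝ :=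
  ∑' t, γ ^ t * r (traj T x a t, a t)

def shapedReward {S A : Type*} (T : S × A → S) (r : S × A → ℝ) (γ : ℝ) (Φ : S → ℝ)
    (p : S × A) : ℝ :=
  r p + γ * Φ (T p) - Φ p.1

theorem eq_ciSup_sub_const_iff {ι G : Type*} [AddGroup G] [ConditionallyCompleteLattice G]
    [AddRightMono G] {f : ι → G} (hf : BddAbove (range f)) (c : G) (i : ι) :
    f i - c = ⨆ j, (f j - c) ↔ f i = ⨆ j, f j := by
  have : Nonempty ι := ⟨i⟩
  rw [← ciSup_sub hf, sub_left_inj]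

theorem Summable.hasSum_succ_sub_self {G : Type*} [AddCommGroup G] [TopologicalSpace G]
    [IsTopologicalAddGroup G] [T2Space G] {f : ℕ → G} (hf : Summable f) :
    HasSum (fun n => f (n + 1) - f n) (-f 0) := by
  convert ((summable_nat_add_iff 1).mpr hf).hasSum.sub hf.hasSum using 1
  rw [hf.tsum_eq_zero_add]
  abel

section Geometric

variable {f : ℕ → ℝ} {C γ : ℝ}

theorem summable_pow_mul_of_abs_le (hf : ∀ t, |f t| ≤ C) (hγ0 : 0 ≤ γ) (hγ1 : γ < 1) :
    Summable fun t => γ ^ t * f t :=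
  ((summable_geometric_of_lt_one hγ0 hγ1).mul_right C).of_norm_bounded fun t => by
    rw [norm_mul, norm_pow, Real.norm_eq_abs, Real.norm_eq_abs, abs_of_nonneg hγ0]
    exact mul_le_mul_of_nonneg_left (hf t) (pow_nonneg hγ0 t)

theorem tsum_pow_mul_le_of_abs_le (hf : ∀ t, |f t| ≤ C) (hγ0 : 0 ≤ γ) (hγ1 : γ < 1) :
    ∑' t, γ ^ t * f t ≤ C / (1 - γ) :=
  calc ∑' t, γ ^ t * f t ≤ ∑' t, γ ^ t * C :=
        (summable_pow_mul_of_abs_le hf hγ0 hγ1).tsum_le_tsum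
          (fun t => mul_le_mul_of_nonneg_left (le_of_abs_le (hf t)) (pow_nonneg hγ0 t))
          ((summable_geometric_of_lt_one hγ0 hγ1).mul_right C)
    _ = C / (1 - γ) := by
        rw [tsum_mul_right, tsum_geometric_of_lt_one hγ0 hγ1, inv_mul_eq_div]

end Geometric

section DeterministicSystem

variable {S A : Type*} {T : S × A → S} {r : S × A → ℝ} {C γ : ℝ}

theorem summable_discounted_reward (hr : ∀ p, |r p| ≤ C) (hγ0 : 0 ≤ γ) (hγ1 : γ < 1)
    (x : S) (a : ℕ → A) : Summable fun t => γ ^ t * r (traj T x a t, a t) :=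
  summable_pow_mul_of_abs_le (fun _ => hr _) hγ0 hγ1

theorem bddAbove_range_discountedReturn (hr : ∀ p, |r p| ≤ C) (hγ0 : 0 ≤ γ) (hγ1 : γ < 1)
    (x : S) : BddAbove (range (discountedReturn T r γ x)) := by
  refine ⟨C / (1 - γ), ?_⟩
  rintro _ ⟨a, rfl⟩
  exact tsum_pow_mul_le_of_abs_le (fun _ => hr _) hγ0 hγ1

theorem discountedReturn_shapedReward {Φ : S → ℝ} {B : ℝ} (hr : ∀ p, |r p| ≤ C)
    (hΦ : ∀ x, |Φ x| ≤ B) (hγ0 : 0 ≤ γ) (hγ1 : γ < 1) (x : S) (a : ℕ → A) :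
    discountedReturn T (shapedReward T r γ Φ) γ x a = discountedReturn T r γ x a - Φ x := by
  have hΦsum : Summable fun t => γ ^ t * Φ (traj T x a t) :=
    summable_pow_mul_of_abs_le (fun _ => hΦ _) hγ0 hγ1
  have hsum : HasSum (fun t => γ ^ t * shapedReward T r γ Φ (traj T x a t, a t))
      (discountedReturn T r γ x a + -Φ x) := by
    convert (summable_discounted_reward hr hγ0 hγ1 x a).hasSum.add
      hΦsum.hasSum_succ_sub_self using 1
    · funext t
      simp only [shapedReward, traj, pow_succ]
      ring
    · simp [discountedReturn, traj]
  rw [discountedReturn, hsum.tsum_eq, sub_eq_add_neg]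

end DeterministicSystem

theorem stmt7_general {S A : Type*} (T : S × A → S)
    (r : S × A → ℝ) (C : ℝ) (hr : ∀ p, |r p| ≤ C)
    (γ : ℝ) (hγ0 : 0 < γ) (hγ1 : γ < 1)
    (Φ : S → ℝ) (B : ℝ) (hΦ : ∀ x, |Φ x| ≤ B) (x : S) (a : ℕ → A) :
    ((∑' t, γ ^ t *
        (r (traj T x a t, a t) + γ * Φ (traj T x a (t + 1)) - Φ (traj T x a t)))
      = ⨆ b : ℕ → A, ∑' t, γ ^ t *
          (r (traj T x b t, b t) + γ * Φ (traj T x b (t + 1)) - Φ (traj T x b t)))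
      ↔
    ((∑' t, γ ^ t * r (traj T x a t, a t))
      = ⨆ b : ℕ → A, ∑' t, γ ^ t * r (traj T x b t, b t)) := by
  change discountedReturn T (shapedReward T r γ Φ) γ x a
        = ⨆ b, discountedReturn T (shapedReward T r γ Φ) γ x b
      ↔ discountedReturn T r γ x a = ⨆ b, discountedReturn T r γ x b
  simp only [discountedReturn_shapedReward hr hΦ hγ0.le hγ1]
  exact eq_ciSup_sub_const_iff (bddAbove_range_discountedReturn hr hγ0.le hγ1 x) (Φ x) a

/-- Optimal-policy invariance of potential-based shaping for a deterministic
system: an action sequence attains the supremum of the shaped return iff it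
attains the supremum of the original return. -/
theorem stmt7 {S A : Type*} [Nonempty A] (T : S × A → S)
    (r : S × A → ℝ) (C : ℝ) (hr : ∀ p, |r p| ≤ C)
    (γ : ℝ) (hγ0 : 0 < γ) (hγ1 : γ < 1)
    (Φ : S → ℝ) (B : ℝ) (hΦ : ∀ x, |Φ x| ≤ B) (x : S) (a : ℕ → A) :
    ((∑' t, γ ^ t *
        (r (traj T x a t, a t) + γ * Φ (traj T x a (t + 1)) - Φ (traj T x a t)))
      = ⨆ b : ℕ → A, ∑' t, γ ^ t *
          (r (traj T x b t, b t) + γ * Φ (traj T x b (t + 1)) - Φ (traj T x b t)))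
      ↔
    ((∑' t, γ ^ t * r (traj T x a t, a t))
      = ⨆ b : ℕ → A, ∑' t, γ ^ t * r (traj T x b t, b t)) :=
  stmt7_general T r C hr γ hγ0 hγ1 Φ B hΦ x a
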